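/- For all ν > -1/2 and x > 0, M_ν(x) ≥ (Γ(ν+1/2)/Γ(ν+1)) · exp(-Γ(ν+1) x / (√π Γ(ν+3/2))), where M_ν(x) = (2/√π) ∫₀¹ (1-t²)^(ν-1/2) e^(-xt) dt. -/

import Mathlib

/-!
Write `M_ν(x) = (2/√π) ∫₀¹ w(t) e^{-xt} dt` with `w(t) = (1 - t²)^(ν - 1/2)`. Jensen's inequality
for `exp` and the finite measure `w(t) dt`, obtained by integrating the tangent line of `exp` at
the `w`-mean of `-xt`, gives `∫₀¹ w(t) e^{-xt} dt ≥ A e^{-xB/A}` with `A = ∫₀¹ w` and `B = ∫₀¹ t w`.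
The substitution `s = t²` turns both moments into Beta integrals:
`A = √π Γ(ν+1/2) / (2 Γ(ν+1))` and `B = Γ(ν+1/2) / (2 Γ(ν+3/2))`.
-/

open Real MeasureTheory intervalIntegral

noncomputable def strM (ν x : ℝ) : ℝ :=
  2 / Real.sqrt Real.pi * ∫ t in (0:ℝ)..1, (1 - t ^ 2) ^ (ν - 1 / 2) * Real.exp (-x * t)

open Set

theorem ofReal_rpow_mul_one_sub_rpow {a b x : ℝ} (hx : x ∈ Icc (0 : ℝ) 1) :
    ((x ^ (a - 1) * (1 - x) ^ (b - 1) : ℝ) : ℂ) =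
      (x : ℂ) ^ ((a : ℂ) - 1) * (1 - (x : ℂ)) ^ ((b : ℂ) - 1) := by
  rw [Complex.ofReal_mul, Complex.ofReal_cpow hx.1, Complex.ofReal_cpow (sub_nonneg.2 hx.2)]
  push_cast
  rfl

theorem intervalIntegrable_rpow_mul_one_sub_rpow {a b : ℝ} (ha : 0 < a) (hb : 0 < b) :
    IntervalIntegrable (fun x => x ^ (a - 1) * (1 - x) ^ (b - 1)) volume 0 1 := by
  refine (Complex.betaIntegral_convergent (u := a) (v := b) (by simpa) (by simpa)).norm.congr
    fun x hx => ?_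
  have hx' : x ∈ Icc (0 : ℝ) 1 := Ioc_subset_Icc_self (by simpa using hx)
  simp only [← ofReal_rpow_mul_one_sub_rpow hx', Complex.norm_real, norm_of_nonneg
    (mul_nonneg (rpow_nonneg hx'.1 _) (rpow_nonneg (sub_nonneg.2 hx'.2) _))]

theorem integral_rpow_mul_one_sub_rpow {a b : ℝ} (ha : 0 < a) (hb : 0 < b) :
    ∫ x in (0 : ℝ)..1, x ^ (a - 1) * (1 - x) ^ (b - 1) = Gamma a * Gamma b / Gamma (a + b) := by
  have h := Complex.betaIntegral_eq_Gamma_mul_div a b (by simpa) (by simpa)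
  rw [← Complex.ofReal_add, Complex.Gamma_ofReal, Complex.Gamma_ofReal, Complex.Gamma_ofReal,
    Complex.betaIntegral, ← integral_congr fun x hx =>
      ofReal_rpow_mul_one_sub_rpow (uIcc_of_le (zero_le_one' ℝ) ▸ hx),
    intervalIntegral.integral_ofReal] at h
  exact_mod_cast h

theorem mul_sq_rpow_sub_one {t : ℝ} (ht : 0 < t) (a : ℝ) :
    t * (t ^ 2) ^ (a - 1) = t ^ (2 * a - 1) := by
  rw [← rpow_natCast, ← rpow_mul ht.le, show 2 * a - 1 = 1 + (2 : ℕ) * (a - 1) by push_cast; ring,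
    rpow_add ht, rpow_one]

theorem integral_Icc_mul_comp_sq {b : ℝ} (hb : 0 ≤ b) (g : ℝ → ℝ) :
    ∫ t in Icc 0 b, 2 * t * g (t ^ 2) = ∫ s in Icc 0 (b ^ 2), g s := by
  have h := integral_Icc_deriv_smul_of_deriv_nonneg (f := fun t => t ^ 2) (g := g)
    (by fun_prop) (fun t _ => by simpa using hasDerivAt_pow 2 t) (fun t ht => by linarith [ht.1]) hb
  rwa [zero_pow two_ne_zero] at h

theorem integrableOn_Icc_mul_comp_sq_iff {b : ℝ} (hb : 0 ≤ b) (g : ℝ → ℝ) :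
    IntegrableOn (fun t => 2 * t * g (t ^ 2)) (Icc 0 b) ↔ IntegrableOn g (Icc 0 (b ^ 2)) := by
  have h := integrableOn_Icc_deriv_smul_iff_of_deriv_nonneg (f := fun t => t ^ 2) (g := g)
    (by fun_prop) (fun t _ => by simpa using hasDerivAt_pow 2 t) (fun t ht => by linarith [ht.1]) hb
  rwa [zero_pow two_ne_zero] at h

theorem integral_rpow_mul_one_sub_sq_rpow {a p : ℝ} (ha : 0 < a) (hp : -1 < p) :
    ∫ t in (0 : ℝ)..1, t ^ (2 * a - 1) * (1 - t ^ 2) ^ p =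
      Gamma a * Gamma (p + 1) / (2 * Gamma (a + p + 1)) := by
  have hsub := integral_Icc_mul_comp_sq zero_le_one fun s => s ^ (a - 1) * (1 - s) ^ (p + 1 - 1)
  have hbeta := integral_rpow_mul_one_sub_rpow ha (neg_lt_iff_pos_add.mp hp)
  rw [one_pow] at hsub
  rw [intervalIntegral.integral_of_le zero_le_one, ← integral_Icc_eq_integral_Ioc,
    ← hsub, integral_Icc_eq_integral_Ioo] at hbeta
  have hcongr : ∫ t in Ioo (0 : ℝ) 1, 2 * t * ((t ^ 2) ^ (a - 1) * (1 - t ^ 2) ^ (p + 1 - 1)) =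
      2 * ∫ t in Ioo (0 : ℝ) 1, t ^ (2 * a - 1) * (1 - t ^ 2) ^ p := by
    rw [← MeasureTheory.integral_const_mul]
    refine setIntegral_congr_fun measurableSet_Ioo fun t ht => ?_
    rw [add_sub_cancel_right, ← mul_sq_rpow_sub_one ht.1]
    ring
  rw [hcongr, ← add_assoc] at hbeta
  rw [intervalIntegral.integral_of_le zero_le_one, integral_Ioc_eq_integral_Ioo,
    mul_comm 2 (Gamma _), ← div_div, ← hbeta]
  ring

theorem intervalIntegrable_rpow_mul_one_sub_sq_rpow {a p : ℝ} (ha : 0 < a) (hp : -1 < p) :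
    IntervalIntegrable (fun t => t ^ (2 * a - 1) * (1 - t ^ 2) ^ p) volume 0 1 := by
  have hbeta := intervalIntegrable_rpow_mul_one_sub_rpow ha (neg_lt_iff_pos_add.mp hp)
  rw [intervalIntegrable_iff_integrableOn_Icc_of_le zero_le_one] at hbeta
  have hsub := (integrableOn_Icc_mul_comp_sq_iff zero_le_one _).mpr (by rwa [one_pow])
  rw [integrableOn_Icc_iff_integrableOn_Ioo] at hsub
  rw [intervalIntegrable_iff_integrableOn_Ioo_of_le zero_le_one]
  refine IntegrableOn.congr_fun (hsub.const_mul 2⁻¹) (fun t ht => ?_) measurableSet_Ioo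
  rw [add_sub_cancel_right, ← mul_sq_rpow_sub_one ht.1]
  ring

theorem integral_mul_exp_ge {α : Type*} [MeasurableSpace α] {μ : Measure α} {w f : α → ℝ}
    (hw : 0 ≤ᵐ[μ] w) (hwi : Integrable w μ) (hfw : Integrable (fun a => f a * w a) μ)
    (hwe : Integrable (fun a => w a * exp (f a)) μ) :
    (∫ a, w a ∂μ) * exp ((∫ a, f a * w a ∂μ) / ∫ a, w a ∂μ) ≤ ∫ a, w a * exp (f a) ∂μ := by
  set A := ∫ a, w a ∂μ
  set m := (∫ a, f a * w a ∂μ) / A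
  by_cases hA : A = 0
  · rw [hA, zero_mul]
    exact integral_nonneg_of_ae (hw.mono fun a ha => mul_nonneg ha (exp_pos _).le)
  have htangent : ∀ a, 0 ≤ w a →
      exp m * (1 - m) * w a + exp m * (f a * w a) ≤ w a * exp (f a) := fun a ha => by
    have h := mul_le_mul_of_nonneg_left (add_one_le_exp (f a - m)) (exp_pos m).le
    rw [← exp_add, add_sub_cancel] at h
    calc _ = w a * (exp m * (f a - m + 1)) := by ring
      _ ≤ w a * exp (f a) := mul_le_mul_of_nonneg_left h ha
  calc A * exp m = exp m * (1 - m) * A + exp m * ∫ a, f a * w a ∂μ := by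
        rw [show (∫ a, f a * w a ∂μ) = m * A by rw [div_mul_cancel₀ _ hA]]
        ring
    _ = ∫ a, exp m * (1 - m) * w a + exp m * (f a * w a) ∂μ := by
        rw [integral_add (hwi.const_mul _) (hfw.const_mul _), MeasureTheory.integral_const_mul,
          MeasureTheory.integral_const_mul]
    _ ≤ ∫ a, w a * exp (f a) ∂μ :=
        integral_mono_ae ((hwi.const_mul _).add (hfw.const_mul _)) hwe
          (hw.mono htangent)

theorem integral_one_sub_sq_rpow_mul_exp_ge {p : ℝ} (hp : -1 < p) (x : ℝ) :
    √π * Gamma (p + 1) / (2 * Gamma (p + 3 / 2)) *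
        exp (-x * (Gamma (p + 3 / 2) / (√π * Gamma (p + 2)))) ≤
      ∫ t in (0 : ℝ)..1, (1 - t ^ 2) ^ p * exp (-x * t) := by
  have hw : IntervalIntegrable (fun t : ℝ => (1 - t ^ 2) ^ p) volume 0 1 := by
    simpa using intervalIntegrable_rpow_mul_one_sub_sq_rpow one_half_pos hp
  have htw : IntervalIntegrable (fun t : ℝ => t * (1 - t ^ 2) ^ p) volume 0 1 := by
    simpa [show (2 : ℝ) - 1 = 1 by norm_num] using
      intervalIntegrable_rpow_mul_one_sub_sq_rpow one_pos hp
  have hA : ∫ t in (0 : ℝ)..1, (1 - t ^ 2) ^ p =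
      √π * Gamma (p + 1) / (2 * Gamma (p + 3 / 2)) := by
    have h := integral_rpow_mul_one_sub_sq_rpow one_half_pos hp
    rw [Gamma_one_half_eq, show 1 / 2 + p + 1 = p + 3 / 2 by ring] at h
    simpa using h
  have hB : ∫ t in (0 : ℝ)..1, t * (1 - t ^ 2) ^ p = Gamma (p + 1) / (2 * Gamma (p + 2)) := by
    have h := integral_rpow_mul_one_sub_sq_rpow one_pos hp
    rw [Gamma_one, one_mul, show 1 + p + 1 = p + 2 by ring] at h
    simpa [show (2 : ℝ) - 1 = 1 by norm_num] using h
  have hJ := integral_mul_exp_ge (μ := volume.restrict (Ioc 0 1)) (f := fun t => -x * t)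
    (ae_restrict_of_forall_mem measurableSet_Ioc fun t ht =>
      rpow_nonneg (by nlinarith [ht.1, ht.2]) _)
    hw.1 (by simp only [mul_assoc]; exact (htw.const_mul (-x)).1)
    (hw.mul_continuousOn (by fun_prop)).1
  simp only [← intervalIntegral.integral_of_le zero_le_one, mul_assoc,
    intervalIntegral.integral_const_mul, hA, hB] at hJ
  convert hJ using 4
  have := Gamma_pos_of_pos (neg_lt_iff_pos_add.mp hp)
  field_simp

theorem strM_lower_bound_general (ν x : ℝ) (hν : -1 / 2 < ν) :
    strM ν x ≥ Real.Gamma (ν + 1 / 2) / Real.Gamma (ν + 1) *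
      Real.exp (-(Real.Gamma (ν + 1) * x) / (Real.sqrt Real.pi * Real.Gamma (ν + 3 / 2))) := by
  have h := integral_one_sub_sq_rpow_mul_exp_ge (p := ν - 1 / 2) (by linarith) x
  rw [show ν - 1 / 2 + 1 = ν + 1 / 2 by ring, show ν - 1 / 2 + 3 / 2 = ν + 1 by ring,
    show ν - 1 / 2 + 2 = ν + 3 / 2 by ring] at h
  have hΓ := Gamma_pos_of_pos (by linarith : 0 < ν + 1)
  have hπ := sqrt_pos.mpr pi_pos
  calc _ = 2 / √π * (√π * Gamma (ν + 1 / 2) / (2 * Gamma (ν + 1)) *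
        exp (-x * (Gamma (ν + 1) / (√π * Gamma (ν + 3 / 2))))) := by
        field_simp
    _ ≤ strM ν x := mul_le_mul_of_nonneg_left h (by positivity)

theorem strM_lower_bound (ν x : ℝ) (hν : -1 / 2 < ν) (hx : 0 < x) :
    strM ν x ≥ Real.Gamma (ν + 1 / 2) / Real.Gamma (ν + 1) *
      Real.exp (-(Real.Gamma (ν + 1) * x) / (Real.sqrt Real.pi * Real.Gamma (ν + 3 / 2))) :=
  strM_lower_bound_general ν x hν
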